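/- arXiv:1206.1975 — 2 statements merged into one kernel-verified Lean document; each statement's English description precedes it below -/
import Mathlib

section
/- Let A be an n-by-n weighted shift matrix (n ≥ 2) with weights a_1, …, a_{n−1}, 0 (the last weight equal to zero). Then for every z ∈ ℂ, det(z·I_n + Re A) = Σ_{r=0}^{⌊n/2⌋} S_r(|a_1|², …, |a_{n−1}|², 0)·(−1/4)^r·z^{n−2r}, where Re A = (A + A*)/2. -/
open Matrix

/-- The n-by-n weighted shift matrix with weights `a 0, …, a (n-1)`
(representing `a_1, …, a_n`): the `(i, i+1)` entry is `a i` (cyclically). -/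
def wsMatrix {n : ℕ} (a : Fin n → ℂ) : Matrix (Fin n) (Fin n) ℂ :=
  fun i j => if (j : ℕ) = ((i : ℕ) + 1) % n then a i else 0

/-- Two square complex matrices are unitarily equivalent if `B = U* A U`
for some unitary `U`. -/
def UnitarilyEquiv {n : ℕ} (A B : Matrix (Fin n) (Fin n) ℂ) : Prop :=
  ∃ U : Matrix (Fin n) (Fin n) ℂ, U ∈ Matrix.unitaryGroup (Fin n) ℂ ∧ B = Uᴴ * A * U

/-- The circularly symmetric function `S_r(c_1, …, c_N)`: the sum, over all
`r`-element subsets of the cyclically ordered index set `{1, …, N}` containing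
no two cyclically adjacent indices, of the products of the corresponding `c`'s.
(`S_0 = 1`, and `S_r = 0` when no such subset exists.) -/
noncomputable def Scirc {N : ℕ} (r : ℕ) (c : Fin N → ℂ) : ℂ :=
  ∑ s ∈ Finset.univ.filter
      (fun s : Finset (Fin N) =>
        s.card = r ∧ ∀ i ∈ s, ∀ j ∈ s, ((i : ℕ) + 1) % N ≠ (j : ℕ)),
    ∏ i ∈ s, c i

/-! With the last weight zero, the corner entries of the cyclic shift vanish and
`z • 1 + Re A` is tridiagonal, with diagonal `z` and off-diagonal products `|a_i|² / 4`.
Expanding along the last row, its determinant satisfies the continuant recurrence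
`F (k + 2) = z F (k + 1) - (|a_k|² / 4) F k`, whose solution is a sum over sets of pairwise
disjoint edges `{i, i + 1}` of a path, an edge contributing `-|a_i|² / 4` and every uncovered
vertex `z`. Since `c_n = 0`, the cyclically independent sets containing `n` contribute nothing to
`S_r`, and those avoiding `n` are exactly these sets of path edges. -/

open Finset

variable {R : Type*} [CommRing R]

section tridiagonal

variable (d : R) (u v : ℕ → R)

def tridiagonal (k : ℕ) : Matrix (Fin k) (Fin k) R :=
  Matrix.of fun i j =>
    if (i : ℕ) = j then d
    else if (j : ℕ) = i + 1 then u i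
    else if (i : ℕ) = j + 1 then v j
    else 0

def continuant (w : ℕ → R) : ℕ → R
  | 0 => 1
  | 1 => d
  | k + 2 => d * continuant w (k + 1) - w k * continuant w k

lemma tridiagonal_apply_eq_zero {k : ℕ} {i j : Fin k}
    (h : (i : ℕ) + 1 < j ∨ (j : ℕ) + 1 < i) :
    tridiagonal d u v k i j = 0 := by
  simp only [tridiagonal, of_apply]
  rw [if_neg (by omega), if_neg (by omega), if_neg (by omega)]

lemma tridiagonal_submatrix_castSucc (k : ℕ) :
    (tridiagonal d u v (k + 1)).submatrix Fin.castSucc Fin.castSucc = tridiagonal d u v k := by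
  ext i j
  simp [tridiagonal]

lemma det_tridiagonal_submatrix_castSucc_succAbove (k : ℕ) :
    ((tridiagonal d u v (k + 2)).submatrix Fin.castSucc (Fin.last k).castSucc.succAbove).det =
      u k * (tridiagonal d u v k).det := by
  set B := (tridiagonal d u v (k + 2)).submatrix Fin.castSucc (Fin.last k).castSucc.succAbove
  have hminor :
      B.submatrix (Fin.last k).succAbove (Fin.last k).succAbove = tridiagonal d u v k := by
    ext i j
    simp [B, tridiagonal, Fin.succAbove_castSucc_of_lt _ _ (Fin.castSucc_lt_last j)]
  rw [det_succ_column B (Fin.last k), Fintype.sum_eq_single (Fin.last k), hminor]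
  · simp [B, tridiagonal]
  · intro i hi
    have : (i : ℕ) < k := Fin.val_lt_last hi
    simp [B, tridiagonal_apply_eq_zero, this]

theorem det_tridiagonal :
    ∀ k, (tridiagonal d u v k).det = continuant d (fun i => u i * v i) k
  | 0 => by simp [continuant]
  | 1 => by simp [continuant, tridiagonal]
  | k + 2 => by
    rw [det_succ_row _ (Fin.last (k + 1)),
      Fintype.sum_eq_add (Fin.last k).castSucc (Fin.last (k + 1)) (Fin.castSucc_lt_last _).ne]
    · rw [Fin.succAbove_last, det_tridiagonal_submatrix_castSucc_succAbove,
        tridiagonal_submatrix_castSucc, det_tridiagonal k, det_tridiagonal (k + 1)]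
      simp [continuant, tridiagonal, show k ≠ k + 1 + 1 by omega]
      ring
    · rintro j ⟨hj, hj'⟩
      have : (j : ℕ) < k := by
        simp only [ne_eq, Fin.ext_iff, Fin.val_castSucc, Fin.val_last] at hj hj'
        omega
      simp [tridiagonal_apply_eq_zero, this]

end tridiagonal

def pathIndepSets (k : ℕ) : Finset (Finset ℕ) :=
  (range k).powerset.filter fun s => ∀ i ∈ s, i + 1 ∉ s

section pathIndepSets

variable {k : ℕ} {s : Finset ℕ}

lemma mem_pathIndepSets :
    s ∈ pathIndepSets k ↔ (∀ i ∈ s, i < k) ∧ ∀ i ∈ s, i + 1 ∉ s := by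
  simp [pathIndepSets, subset_iff]

lemma two_mul_card_le_of_mem_pathIndepSets (hs : s ∈ pathIndepSets k) : 2 * #s ≤ k + 1 := by
  rw [mem_pathIndepSets] at hs
  have hdisj : Disjoint s (s.map (addRightEmbedding 1)) := by
    rw [disjoint_left]
    intro i hi hi'
    obtain ⟨j, hj, rfl⟩ := mem_map.mp hi'
    exact hs.2 j hj hi
  have hsub : s ∪ s.map (addRightEmbedding 1) ⊆ range (k + 1) := by
    intro i
    simp only [mem_union, mem_map, addRightEmbedding_apply, mem_range]
    rintro (hi | ⟨j, hj, rfl⟩) <;> grind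
  simpa [card_union_of_disjoint hdisj, two_mul] using card_le_card hsub

lemma filter_notMem_pathIndepSets_succ :
    (pathIndepSets (k + 1)).filter (k ∉ ·) = pathIndepSets k := by
  ext s
  simp only [mem_filter, mem_pathIndepSets]
  constructor
  · rintro ⟨⟨hlt, hind⟩, hk⟩
    refine ⟨fun i hi => ?_, hind⟩
    have := hlt i hi
    have : i ≠ k := by rintro rfl; exact hk hi
    omega
  · rintro ⟨hlt, hind⟩
    exact ⟨⟨fun i hi => (hlt i hi).trans k.lt_succ_self, hind⟩, fun hk => (hlt k hk).false⟩

lemma filter_mem_pathIndepSets_succ :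
    (pathIndepSets (k + 1)).filter (k ∈ ·) = (pathIndepSets (k - 1)).image (insert k) := by
  ext s
  simp only [mem_filter, mem_pathIndepSets, mem_image]
  constructor
  · rintro ⟨⟨hlt, hind⟩, hk⟩
    refine ⟨s.erase k, ⟨fun i hi => ?_, fun i hi h =>
      hind i (mem_of_mem_erase hi) (mem_of_mem_erase h)⟩, insert_erase hk⟩
    have := hlt i (mem_of_mem_erase hi)
    have := ne_of_mem_erase hi
    have : i + 1 ≠ k := fun h => hind i (mem_of_mem_erase hi) (h ▸ hk)
    omega
  · rintro ⟨t, ⟨hlt, hind⟩, rfl⟩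
    refine ⟨⟨?_, ?_⟩, mem_insert_self k t⟩
    · simp only [mem_insert, forall_eq_or_imp]
      exact ⟨k.lt_succ_self, fun i hi => by have := hlt i hi; omega⟩
    · simp only [mem_insert, forall_eq_or_imp, not_or]
      refine ⟨⟨by omega, fun h => ?_⟩, fun i hi => ⟨?_, hind i hi⟩⟩
      · have := hlt _ h
        omega
      · have := hlt i hi
        omega

end pathIndepSets

-- `i ∈ s` stands for the edge `{i, i + 1}` of the path on `k` vertices.
theorem continuant_eq_sum_pathIndepSets (d : R) (w : ℕ → R) :
    ∀ k, continuant d w k =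
      ∑ s ∈ pathIndepSets (k - 1), (∏ i ∈ s, -w i) * d ^ (k - 2 * #s)
  | 0 => by simp [continuant, pathIndepSets, filter_singleton]
  | 1 => by simp [continuant, pathIndepSets, filter_singleton]
  | k + 2 => by
    have notMem {t} (ht : t ∈ pathIndepSets (k - 1)) : k ∉ t := fun hk => by
      have := (mem_pathIndepSets.mp ht).1 k hk
      omega
    rw [continuant, continuant_eq_sum_pathIndepSets d w (k + 1),
      continuant_eq_sum_pathIndepSets d w k, show k + 1 - 1 = k by omega,
      show k + 2 - 1 = k + 1 by omega,
      ← sum_filter_not_add_sum_filter (pathIndepSets (k + 1)) (k ∈ ·),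
      filter_notMem_pathIndepSets_succ, filter_mem_pathIndepSets_succ, sum_image, mul_sum, mul_sum,
      sub_eq_add_neg, ← sum_neg_distrib]
    · congr 1
      · refine sum_congr rfl fun s hs => ?_
        rw [show k + 2 - 2 * #s = k + 1 - 2 * #s + 1 by
          have := two_mul_card_le_of_mem_pathIndepSets hs; omega, pow_succ]
        ring
      · refine sum_congr rfl fun t ht => ?_
        have hk := notMem ht
        rw [prod_insert hk, card_insert_of_notMem hk,
          show k + 2 - 2 * (#t + 1) = k - 2 * #t by omega]
        ring
    · intro t ht t' ht' h
      rw [← erase_insert (notMem ht), h, erase_insert (notMem ht')]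

lemma map_valEmbedding_filter_val_mem {n : ℕ} {t : Finset ℕ} (ht : ∀ i ∈ t, i < n) :
    (univ.filter fun i : Fin n => (i : ℕ) ∈ t).map Fin.valEmbedding = t := by
  ext m
  simp only [mem_map, mem_filter, mem_univ, true_and, Fin.valEmbedding_apply]
  exact ⟨by rintro ⟨i, hi, rfl⟩; exact hi, fun hm => ⟨⟨m, ht m hm⟩, hm, rfl⟩⟩

lemma map_valEmbedding_mem_pathIndepSets_iff {n : ℕ} {s : Finset (Fin n)}
    (hs : ∀ i ∈ s, (i : ℕ) + 1 < n) :
    s.map Fin.valEmbedding ∈ pathIndepSets (n - 1) ↔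
      ∀ i ∈ s, ∀ j ∈ s, ((i : ℕ) + 1) % n ≠ (j : ℕ) := by
  simp only [mem_pathIndepSets, mem_map, Fin.valEmbedding_apply, forall_exists_index, and_imp,
    forall_apply_eq_imp_iff₂, not_exists, not_and]
  constructor
  · rintro ⟨-, hind⟩ i hi j hj hij
    rw [Nat.mod_eq_of_lt (hs i hi)] at hij
    exact hind i hi j hj hij.symm
  · intro hcyc
    refine ⟨fun i hi => by have := hs i hi; omega, fun i hi j hj hji => hcyc i hi j hj ?_⟩
    rw [Nat.mod_eq_of_lt (hs i hi), hji]

lemma Scirc_eq_sum_pathIndepSets {n : ℕ} (f : ℕ → ℂ) (hf : f (n - 1) = 0) (r : ℕ) :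
    Scirc r (fun i : Fin n => f i) =
      ∑ t ∈ (pathIndepSets (n - 1)).filter (#· = r), ∏ i ∈ t, f i := by
  have lt_of_mem {t : Finset ℕ} (ht : t ∈ pathIndepSets (n - 1)) {i : ℕ} (hi : i ∈ t) :
      i + 1 < n := by
    have := (mem_pathIndepSets.mp ht).1 i hi
    omega
  unfold Scirc
  rw [← sum_filter_of_ne (p := fun s : Finset (Fin n) => ∀ i ∈ s, (i : ℕ) + 1 < n),
    filter_filter]
  · apply sum_nbij' (fun s => s.map Fin.valEmbedding)
      (fun t => univ.filter fun i : Fin n => (i : ℕ) ∈ t)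
    · intro s hs
      simp only [mem_filter, mem_univ, true_and] at hs
      obtain ⟨⟨rfl, hcyc⟩, hlast⟩ := hs
      exact mem_filter.mpr ⟨(map_valEmbedding_mem_pathIndepSets_iff hlast).mpr hcyc, card_map _⟩
    · intro t ht
      obtain ⟨hpath, rfl⟩ := mem_filter.mp ht
      have hmap := map_valEmbedding_filter_val_mem fun i hi => (lt_of_mem hpath hi).le
      have hlast : ∀ i ∈ univ.filter fun i : Fin n => (i : ℕ) ∈ t, (i : ℕ) + 1 < n :=
        fun i hi => lt_of_mem hpath (mem_filter.mp hi).2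
      refine mem_filter.mpr ⟨mem_univ _, ⟨?_, ?_⟩, hlast⟩
      · rw [← card_map Fin.valEmbedding, hmap]
      · rw [← map_valEmbedding_mem_pathIndepSets_iff hlast, hmap]
        exact hpath
    · intro s _
      ext i
      simp [Fin.val_inj]
    · intro t ht
      exact map_valEmbedding_filter_val_mem fun i hi => (lt_of_mem (mem_filter.mp ht).1 hi).le
    · intro s _
      rw [prod_map]
      rfl
  · intro s _ hs i hi
    by_contra h
    exact hs (prod_eq_zero hi (by rw [show (i : ℕ) = n - 1 by omega, hf]))

lemma sum_range_Scirc_mul_pow {n : ℕ} (f : ℕ → ℂ) (hf : f (n - 1) = 0) (x z : ℂ) :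
    ∑ r ∈ range (n / 2 + 1), Scirc r (fun i : Fin n => f i) * x ^ r * z ^ (n - 2 * r) =
      ∑ t ∈ pathIndepSets (n - 1), (∏ i ∈ t, x * f i) * z ^ (n - 2 * #t) := by
  simp_rw [Scirc_eq_sum_pathIndepSets f hf, sum_mul]
  rw [← sum_fiberwise_of_maps_to (g := card) (t := range (n / 2 + 1))]
  · refine sum_congr rfl fun r _ => sum_congr rfl fun t ht => ?_
    rw [(mem_filter.mp ht).2, prod_mul_distrib, prod_const, (mem_filter.mp ht).2]
    ring
  · intro t ht
    have := two_mul_card_le_of_mem_pathIndepSets ht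
    rw [mem_range]
    omega

lemma wsMatrix_apply_of_last_eq_zero {n : ℕ} (w : ℕ → ℂ) (hw : w (n - 1) = 0)
    (i j : Fin n) :
    wsMatrix (fun i : Fin n => w i) i j = if (j : ℕ) = i + 1 then w i else 0 := by
  unfold wsMatrix
  by_cases hi : (i : ℕ) + 1 < n
  · rw [Nat.mod_eq_of_lt hi]
  · simp [show (i : ℕ) = n - 1 by omega, hw]

lemma smul_one_add_half_smul_wsMatrix_eq_tridiagonal {n : ℕ} (w : ℕ → ℂ)
    (hw : w (n - 1) = 0) (z : ℂ) :
    z • (1 : Matrix (Fin n) (Fin n) ℂ) +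
        (1 / 2 : ℂ) • (wsMatrix (fun i : Fin n => w i) + (wsMatrix fun i : Fin n => w i)ᴴ) =
      tridiagonal z (fun i => w i / 2) (fun i => starRingEnd ℂ (w i) / 2) n := by
  ext i j
  simp only [Matrix.add_apply, Matrix.smul_apply, one_apply, conjTranspose_apply,
    wsMatrix_apply_of_last_eq_zero w hw, tridiagonal, of_apply, Fin.ext_iff, smul_eq_mul]
  split_ifs <;> simp <;> first | omega | ring

theorem stmt16_general (n : ℕ) (a : Fin n → ℂ)
    (A : Matrix (Fin n) (Fin n) ℂ)
    (hA : A = wsMatrix fun i => if (i : ℕ) + 1 < n then a i else 0)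
    (z : ℂ) :
    (z • (1 : Matrix (Fin n) (Fin n) ℂ) + (1 / 2 : ℂ) • (A + Aᴴ)).det =
      ∑ r ∈ Finset.range (n / 2 + 1),
        Scirc r (fun i : Fin n =>
            if (i : ℕ) + 1 < n then (((‖a i‖ : ℝ) : ℂ)) ^ 2 else 0) *
          (-(1 / 4) : ℂ) ^ r * z ^ (n - 2 * r) := by
  set w : ℕ → ℂ := fun m => if h : m + 1 < n then a ⟨m, by omega⟩ else 0
  have hw : w (n - 1) = 0 := dif_neg (by omega)
  have hweights :
      (fun i : Fin n => if (i : ℕ) + 1 < n then a i else 0) = fun i : Fin n => w i := by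
    ext i
    simp [w]
  have hnorms : (fun i : Fin n => if (i : ℕ) + 1 < n then ((‖a i‖ : ℝ) : ℂ) ^ 2 else 0) =
      fun i : Fin n => ((‖w i‖ : ℝ) : ℂ) ^ 2 := by
    ext i
    split_ifs <;> simp [w, *]
  rw [hA, hweights, hnorms, smul_one_add_half_smul_wsMatrix_eq_tridiagonal w hw,
    det_tridiagonal, continuant_eq_sum_pathIndepSets,
    sum_range_Scirc_mul_pow (fun i => ((‖w i‖ : ℝ) : ℂ) ^ 2) (by simp [hw])]
  refine sum_congr rfl fun t _ => congrArg (· * _) (prod_congr rfl fun i _ => ?_)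
  rw [← Complex.mul_conj']
  ring

theorem stmt16 (n : ℕ) (hn : 2 ≤ n) (a : Fin n → ℂ)
    (A : Matrix (Fin n) (Fin n) ℂ)
    (hA : A = wsMatrix fun i => if (i : ℕ) + 1 < n then a i else 0)
    (z : ℂ) :
    (z • (1 : Matrix (Fin n) (Fin n) ℂ) + (1 / 2 : ℂ) • (A + Aᴴ)).det =
      ∑ r ∈ Finset.range (n / 2 + 1),
        Scirc r (fun i : Fin n =>
            if (i : ℕ) + 1 < n then (((‖a i‖ : ℝ) : ℂ)) ^ 2 else 0) *
          (-(1 / 4) : ℂ) ^ r * z ^ (n - 2 * r) :=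
  stmt16_general n a A hA z
end

section
/- Let A be an n-by-n weighted shift matrix (n ≥ 3) with weights a_1, …, a_n ∈ ℂ. Then for all x, y, z ∈ ℂ, det(x·Re A + y·Im A + z·I_n) = z^n + Σ_{r=1}^{⌊n/2⌋} S_r(|a_1|², …, |a_n|²)·(x² + y²)^r·(−1/4)^r·z^{n−2r} + ((−1)^{n+1}/2^n)·( (x − iy)^n·(a_1⋯a_n) + (x + iy)^n·(conj(a_1)⋯conj(a_n)) ), where Re A = (A + A*)/2 and Im A = (A − A*)/(2i). -/
open Matrix

/-!
With `α = (x - i y)/2` and `β = (x + i y)/2` the matrix is `α A + β A* + z I`: a cyclic tridiagonal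
matrix with entries `α a_i` above, `β conj a_i` below and `z` on the diagonal. In the Leibniz
expansion only permutations moving every index by at most one step (cyclically) survive. For
`n ≥ 3` these are the two rotations `i ↦ i ± 1`, which give the term with `a_1 ⋯ a_n` and its
conjugate, and the products of disjoint transpositions `(i i+1)` over sets `s` free of cyclically
adjacent indices, each contributing `(-α β)^|s| z^(n - 2|s|) ∏_{i ∈ s} |a_i|²`. Grouping these by
`|s|` and using `α β = (x² + y²)/4` gives the `S_r` terms.
-/

open Equiv Finset
open Fin.CommRing

namespace CyclicTridiagonal

variable {n : ℕ} [NeZero n]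

theorem eq_add_one_iff_val (i j : Fin n) : j = i + 1 ↔ (j : ℕ) = ((i : ℕ) + 1) % n := by
  rw [Fin.ext_iff, Fin.val_add, Fin.val_one', Nat.add_mod_mod]

section ThreeLe

variable (hn : 3 ≤ n)
include hn

theorem one_ne_zero_of_three_le : (1 : Fin n) ≠ 0 := by
  rw [Ne, Fin.ext_iff, Fin.val_zero, Fin.val_one', Nat.mod_eq_of_lt (by omega)]
  omega

theorem two_ne_zero_of_three_le : (2 : Fin n) ≠ 0 := by
  rw [Ne, Fin.ext_iff, Fin.val_zero, Fin.coe_ofNat_eq_mod, Nat.mod_eq_of_lt (by omega)]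
  omega

theorem add_one_ne_self (i : Fin n) : i + 1 ≠ i := fun h =>
  one_ne_zero_of_three_le hn (by linear_combination h)

theorem sub_one_ne_self (i : Fin n) : i - 1 ≠ i := fun h =>
  one_ne_zero_of_three_le hn (by linear_combination -h)

theorem add_one_ne_sub_one (i : Fin n) : i + 1 ≠ i - 1 := fun h =>
  two_ne_zero_of_three_le hn (by linear_combination h)

theorem add_one_add_one_ne_self (i : Fin n) : i + 1 + 1 ≠ i := fun h =>
  two_ne_zero_of_three_le hn (by linear_combination h)

end ThreeLe

def AdjFree (s : Finset (Fin n)) : Prop := ∀ i ∈ s, i + 1 ∉ s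

instance : DecidablePred (AdjFree (n := n)) := fun s => by unfold AdjFree; infer_instance

theorem AdjFree.disjoint_image_add_one {s : Finset (Fin n)} (hs : AdjFree s) :
    Disjoint s (s.image (· + 1)) := by
  rw [disjoint_left]
  intro j hj hj'
  obtain ⟨i, hi, rfl⟩ := mem_image.mp hj'
  exact hs i hi hj

theorem AdjFree.card_union_image_add_one {s : Finset (Fin n)} (hs : AdjFree s) :
    #(s ∪ s.image (· + 1)) = 2 * #s := by
  rw [card_union_of_disjoint hs.disjoint_image_add_one,
    card_image_of_injective _ (add_left_injective 1)]
  ring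

theorem AdjFree.card_le {s : Finset (Fin n)} (hs : AdjFree s) : #s ≤ n / 2 := by
  have := card_le_univ (s ∪ s.image (· + 1))
  rw [hs.card_union_image_add_one, Fintype.card_fin] at this
  omega

theorem adjFree_iff_val (s : Finset (Fin n)) :
    AdjFree s ↔ ∀ i ∈ s, ∀ j ∈ s, ((i : ℕ) + 1) % n ≠ (j : ℕ) := by
  refine forall₂_congr fun i _ => ⟨fun h j hj hij => h ?_, fun h hi' => h _ hi' ?_⟩
  · rwa [(eq_add_one_iff_val i j).mpr hij.symm] at hj
  · exact ((eq_add_one_iff_val i _).mp rfl).symm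

def pairSwapFun (s : Finset (Fin n)) (i : Fin n) : Fin n :=
  if i ∈ s then i + 1 else if i - 1 ∈ s then i - 1 else i

theorem pairSwapFun_involutive {s : Finset (Fin n)} (hs : AdjFree s) :
    Function.Involutive (pairSwapFun s) := by
  intro i
  by_cases hi : i ∈ s
  · simp [pairSwapFun, hi, hs i hi]
  by_cases hi' : i - 1 ∈ s
  · simp [pairSwapFun, hi, hi']
  · simp [pairSwapFun, hi, hi']

open Classical in
/-- The product of the commuting transpositions `(i i+1)`, `i ∈ s`, when `AdjFree s`;
the junk value `1` otherwise. -/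
noncomputable def pairSwap (s : Finset (Fin n)) : Perm (Fin n) :=
  if hs : AdjFree s then (pairSwapFun_involutive hs).toPerm else 1

section PairSwap

variable {s : Finset (Fin n)} (hs : AdjFree s)
include hs

theorem pairSwap_apply (i : Fin n) : pairSwap s i = pairSwapFun s i := by
  rw [pairSwap, dif_pos hs]
  rfl

theorem pairSwap_of_mem {i : Fin n} (hi : i ∈ s) : pairSwap s i = i + 1 := by
  rw [pairSwap_apply hs, pairSwapFun, if_pos hi]

theorem pairSwap_add_one_of_mem {i : Fin n} (hi : i ∈ s) : pairSwap s (i + 1) = i := by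
  rw [← pairSwap_of_mem hs hi, pairSwap_apply hs, pairSwap_apply hs, pairSwapFun_involutive hs]

theorem pairSwap_of_not_mem {i : Fin n} (hi : i ∉ s) (hi' : i - 1 ∉ s) :
    pairSwap s i = i := by
  rw [pairSwap_apply hs, pairSwapFun, if_neg hi, if_neg hi']

theorem pairSwap_mul_self : pairSwap s * pairSwap s = 1 :=
  Perm.ext fun i => by
    simp only [Perm.mul_apply, pairSwap_apply hs, pairSwapFun_involutive hs i, Perm.one_apply]

variable (hn : 3 ≤ n)
include hn

theorem pairSwap_eq_add_one_iff (i : Fin n) : pairSwap s i = i + 1 ↔ i ∈ s := by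
  refine ⟨fun h => ?_, pairSwap_of_mem hs⟩
  by_contra hi
  rw [pairSwap_apply hs, pairSwapFun, if_neg hi] at h
  split_ifs at h
  · exact add_one_ne_sub_one hn i h.symm
  · exact add_one_ne_self hn i h.symm

theorem support_pairSwap : (pairSwap s).support = s ∪ s.image (· + 1) := by
  ext i
  simp only [Perm.mem_support, mem_union, mem_image]
  by_cases hi : i ∈ s
  · simp only [pairSwap_of_mem hs hi, ne_eq, add_one_ne_self hn, hi]
    tauto
  by_cases hi' : i - 1 ∈ s
  · have h := pairSwap_add_one_of_mem hs hi'
    rw [sub_add_cancel] at h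
    simp only [h, ne_eq, sub_one_ne_self hn, hi]
    exact iff_of_true not_false (Or.inr ⟨i - 1, hi', sub_add_cancel i 1⟩)
  · rw [pairSwap_of_not_mem hs hi hi']
    simp only [ne_eq, not_true_eq_false, hi, false_or, false_iff, not_exists, not_and]
    rintro j hj rfl
    exact hi' (by rwa [add_sub_cancel_right])

theorem sign_pairSwap : Perm.sign (pairSwap s) = (-1) ^ #s := by
  rw [Perm.sign_of_pow_two_eq_one (by rw [sq, pairSwap_mul_self hs]), Fintype.card_fin,
    Perm.card_fixedPoints, Perm.sum_cycleType, Fintype.card_fin,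
    Nat.sub_sub_self (by simpa using card_le_univ (pairSwap s).support), support_pairSwap hs hn,
    hs.card_union_image_add_one, Nat.mul_div_cancel_left _ two_pos]

end PairSwap

section Classification

variable (hn : 3 ≤ n) {σ : Perm (Fin n)} (hσ : ∀ i, σ i = i ∨ σ i = i + 1 ∨ σ i = i - 1)
include hn hσ

theorem eq_addRight_one_of_apply_add_one {i : Fin n} (hi : σ i = i + 1) (hi' : σ (i + 1) ≠ i) :
    σ = Equiv.addRight 1 := by
  have step : ∀ j, σ j = j + 1 ∧ σ (j + 1) ≠ j →
      σ (j + 1) = j + 1 + 1 ∧ σ (j + 1 + 1) ≠ j + 1 := by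
    rintro j ⟨hj, hj'⟩
    have hnext : σ (j + 1) = j + 1 + 1 := by
      rcases hσ (j + 1) with h | h | h
      · exact absurd (σ.injective (h.trans hj.symm)) (add_one_ne_self hn j)
      · exact h
      · exact absurd (h.trans (add_sub_cancel_right j 1)) hj'
    refine ⟨hnext, fun h => two_ne_zero_of_three_le hn ?_⟩
    linear_combination σ.injective (h.trans hj.symm)
  have hall : ∀ k : ℕ, σ (i + k) = i + k + 1 ∧ σ (i + k + 1) ≠ i + k := by
    intro k
    induction k with
    | zero => simpa using ⟨hi, hi'⟩
    | succ k ih => simpa [add_assoc] using step _ ih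
  refine Perm.ext fun j => ?_
  simpa using (hall (j - i : Fin n).val).1

theorem eq_addRight_one_or_inv_or_pairSwap :
    σ = Equiv.addRight 1 ∨ σ = (Equiv.addRight 1)⁻¹ ∨ ∃ s, AdjFree s ∧ σ = pairSwap s := by
  by_cases hfwd : ∃ i, σ i = i + 1 ∧ σ (i + 1) ≠ i
  · obtain ⟨i, hi, hi'⟩ := hfwd
    exact Or.inl (eq_addRight_one_of_apply_add_one hn hσ hi hi')
  by_cases hbwd : ∃ i, σ i = i - 1 ∧ σ (i - 1) ≠ i
  · obtain ⟨i, hi, hi'⟩ := hbwd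
    have hσinv : ∀ j, σ⁻¹ j = j ∨ σ⁻¹ j = j + 1 ∨ σ⁻¹ j = j - 1 := fun j => by
      rcases hσ (σ⁻¹ j) with h | h | h <;> rw [Perm.coe_inv, apply_symm_apply] at h
      · exact Or.inl h.symm
      · exact Or.inr (Or.inr (by linear_combination -h))
      · exact Or.inr (Or.inl (by linear_combination -h))
    refine Or.inr (Or.inl (inv_eq_iff_eq_inv.mp ?_))
    refine eq_addRight_one_of_apply_add_one hn hσinv (i := i - 1) ?_ ?_
    · rw [sub_add_cancel, Perm.inv_eq_iff_eq, hi]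
    · rw [sub_add_cancel, Ne, Perm.inv_eq_iff_eq]
      exact hi'.symm
  push Not at hfwd hbwd
  set s := univ.filter fun i => σ i = i + 1
  have hmem : ∀ i, i ∈ s ↔ σ i = i + 1 := by simp [s]
  have hs : AdjFree s := fun i hi hi' => two_ne_zero_of_three_le hn <| by
    linear_combination ((hmem _).mp hi').symm.trans (hfwd i ((hmem i).mp hi))
  refine Or.inr (Or.inr ⟨s, hs, Perm.ext fun j => ?_⟩)
  by_cases hj : j ∈ s
  · rw [pairSwap_of_mem hs hj, (hmem j).mp hj]
  by_cases hj' : j - 1 ∈ s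
  · have h := hfwd _ ((hmem _).mp hj')
    rw [sub_add_cancel] at h
    rw [h, ← pairSwap_add_one_of_mem hs hj', sub_add_cancel]
  rw [pairSwap_of_not_mem hs hj hj']
  rcases hσ j with h | h | h
  · exact h
  · exact absurd ((hmem j).mpr h) hj
  · exact absurd ((hmem _).mpr (by rw [sub_add_cancel, hbwd j h])) hj'

end Classification

theorem sign_addRight_one : Perm.sign (Equiv.addRight (1 : Fin n)) = (-1) ^ (n + 1) := by
  rw [show Equiv.addRight (1 : Fin n) = finRotate n from
    Perm.ext fun i => (finRotate_apply i).symm, sign_finRotate,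
    ← Nat.sub_add_cancel (NeZero.one_le : 1 ≤ n)]
  simp [pow_succ]

theorem addRight_one_mul_self_ne_one (hn : 3 ≤ n) :
    Equiv.addRight (1 : Fin n) * Equiv.addRight 1 ≠ 1 := fun h =>
  two_ne_zero_of_three_le hn <| by
    simpa [one_add_one_eq_two] using congrArg (fun σ : Perm (Fin n) => σ 0) h

theorem prod_addRight_one_inv_apply {R : Type*} [CommMonoid R] (M : Matrix (Fin n) (Fin n) R) :
    ∏ i, M ((Equiv.addRight 1)⁻¹ i) i = ∏ i, M i (i + 1) :=
  (Equiv.prod_comp (Equiv.addRight 1) fun i => M ((Equiv.addRight 1)⁻¹ i) i).symm.trans <| by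
    simp

theorem prod_pairSwap_apply {R : Type*} [CommMonoid R] (M : Matrix (Fin n) (Fin n) R)
    {s : Finset (Fin n)} (hs : AdjFree s) :
    ∏ i, M (pairSwap s i) i =
      (∏ i ∈ s, M i (i + 1) * M (i + 1) i) * ∏ i ∈ (s ∪ s.image (· + 1))ᶜ, M i i := by
  rw [← prod_mul_prod_compl (s ∪ s.image (· + 1)), prod_union hs.disjoint_image_add_one,
    prod_image fun i _ j _ h => add_right_cancel h, ← prod_mul_distrib]
  congr 1
  · refine prod_congr rfl fun i hi => ?_
    rw [pairSwap_of_mem hs hi, pairSwap_add_one_of_mem hs hi, mul_comm]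
  · refine prod_congr rfl fun i hi => ?_
    rw [mem_compl, mem_union, not_or, mem_image] at hi
    rw [pairSwap_of_not_mem hs hi.1 fun h => hi.2 ⟨i - 1, h, sub_add_cancel i 1⟩]

theorem pairSwap_injOn (hn : 3 ≤ n) : Set.InjOn pairSwap {s : Finset (Fin n) | AdjFree s} :=
  fun s hs t ht h => Finset.ext fun i => by
    rw [← pairSwap_eq_add_one_iff hs hn, ← pairSwap_eq_add_one_iff ht hn, h]

variable (n) in
noncomputable def neighbourPerms : Finset (Perm (Fin n)) :=
  insert (Equiv.addRight 1) (insert (Equiv.addRight 1)⁻¹ ((univ.filter AdjFree).image pairSwap))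

theorem mem_neighbourPerms (hn : 3 ≤ n) {σ : Perm (Fin n)}
    (hσ : ∀ i, σ i = i ∨ σ i = i + 1 ∨ σ i = i - 1) : σ ∈ neighbourPerms n := by
  rcases eq_addRight_one_or_inv_or_pairSwap hn hσ with h | h | ⟨s, hs, h⟩
  · exact h ▸ mem_insert_self _ _
  · exact h ▸ mem_insert_of_mem (mem_insert_self _ _)
  · exact h ▸ mem_insert_of_mem (mem_insert_of_mem (mem_image_of_mem _ (by simpa using hs)))

theorem sum_neighbourPerms {M : Type*} [AddCommMonoid M] (hn : 3 ≤ n) (f : Perm (Fin n) → M) :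
    ∑ σ ∈ neighbourPerms n, f σ =
      f (Equiv.addRight 1) + f (Equiv.addRight 1)⁻¹ + ∑ s with AdjFree s, f (pairSwap s) := by
  have hrot := addRight_one_mul_self_ne_one hn
  have hrot_not_mem : Equiv.addRight (1 : Fin n) ∉
      insert (Equiv.addRight 1)⁻¹ ((univ.filter AdjFree).image pairSwap) := by
    simp only [mem_insert, mem_image, mem_filter, mem_univ, true_and, not_or, not_exists, not_and]
    refine ⟨fun h => hrot (mul_eq_one_iff_eq_inv.mpr h), fun s hs h => hrot ?_⟩
    rw [← h, pairSwap_mul_self hs]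
  have hrot_inv_not_mem :
      (Equiv.addRight (1 : Fin n))⁻¹ ∉ (univ.filter AdjFree).image pairSwap := by
    simp only [mem_image, mem_filter, mem_univ, true_and, not_exists, not_and]
    refine fun s hs h => hrot (inv_eq_one.mp ?_)
    rw [_root_.mul_inv_rev, ← h, pairSwap_mul_self hs]
  rw [neighbourPerms, sum_insert hrot_not_mem, sum_insert hrot_inv_not_mem,
    sum_image (by simpa using pairSwap_injOn hn), add_assoc]

theorem det_eq_of_cyclicTridiagonal {R : Type*} [CommRing R] (hn : 3 ≤ n)
    (M : Matrix (Fin n) (Fin n) R) (hM : ∀ i j, M i j ≠ 0 → i = j ∨ i = j + 1 ∨ i = j - 1) :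
    M.det = (-1) ^ (n + 1) * (∏ i, M i (i + 1) + ∏ i, M (i + 1) i) +
      ∑ s with AdjFree s, (-1) ^ #s *
        ((∏ i ∈ s, M i (i + 1) * M (i + 1) i) * ∏ i ∈ (s ∪ s.image (· + 1))ᶜ, M i i) := by
  have hvanish : ∀ σ ∈ univ, σ ∉ neighbourPerms n → (Perm.sign σ : R) * ∏ i, M (σ i) i = 0 := by
    intro σ _ hσ
    obtain ⟨i, hi⟩ : ∃ i, M (σ i) i = 0 := by
      by_contra! h
      exact hσ (mem_neighbourPerms hn fun i => hM _ _ (h i))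
    rw [prod_eq_zero (f := fun j => M (σ j) j) (mem_univ i) hi, mul_zero]
  rw [det_apply', ← sum_subset (subset_univ _) hvanish, sum_neighbourPerms hn, Perm.sign_inv,
    sign_addRight_one, prod_addRight_one_inv_apply]
  congr 1
  · simp only [coe_addRight]
    push_cast
    ring
  · refine sum_congr rfl fun s hs => ?_
    rw [sign_pairSwap (mem_filter.mp hs).2 hn, prod_pairSwap_apply M (mem_filter.mp hs).2]
    push_cast
    rfl

end CyclicTridiagonal

open CyclicTridiagonal

theorem Scirc_zero {N : ℕ} (c : Fin N → ℂ) : Scirc 0 c = 1 := by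
  rw [Scirc, Finset.sum_eq_single ∅ (fun s hs hne => ?_) (fun h => ?_), prod_empty]
  · exact absurd (card_eq_zero.mp (mem_filter.mp hs).2.1) hne
  · exact absurd (mem_filter.mpr ⟨mem_univ _, card_empty, by simp⟩) h

theorem sum_Icc_Scirc_mul {n : ℕ} [NeZero n] (c : Fin n → ℂ) (f : ℕ → ℂ) :
    ∑ r ∈ Icc 0 (n / 2), Scirc r c * f r = ∑ s with AdjFree s, f #s * ∏ i ∈ s, c i := by
  rw [← sum_fiberwise_of_maps_to (t := Icc 0 (n / 2)) (g := card)
    fun s hs => mem_Icc.mpr ⟨Nat.zero_le _, (mem_filter.mp hs).2.card_le⟩]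
  refine sum_congr rfl fun r _ => ?_
  rw [Scirc, sum_mul, filter_filter]
  refine sum_congr (filter_congr fun s _ => ?_) fun s hs => ?_
  · rw [adjFree_iff_val, and_comm]
  · rw [(mem_filter.mp hs).2.2, mul_comm]


section WeightedShift

theorem smul_re_add_smul_im_add_smul_one {n : ℕ} (A : Matrix (Fin n) (Fin n) ℂ) (x y z : ℂ) :
    x • ((1 / 2 : ℂ) • (A + Aᴴ)) + y • ((1 / (2 * Complex.I) : ℂ) • (A - Aᴴ)) + z • 1 =
      ((x - Complex.I * y) / 2) • A + ((x + Complex.I * y) / 2) • Aᴴ + z • 1 := by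
  have hI : (1 / (2 * Complex.I) : ℂ) = -Complex.I / 2 := by
    field_simp
    simp
  rw [hI]
  module

variable {n : ℕ} [NeZero n] (a : Fin n → ℂ)

theorem wsMatrix_apply (i j : Fin n) : wsMatrix a i j = if j = i + 1 then a i else 0 := by
  simp only [wsMatrix, eq_add_one_iff_val]

variable (α β z : ℂ)

theorem smul_wsMatrix_add_apply_eq_zero {i j : Fin n} (h : i ≠ j) (h₁ : i ≠ j + 1)
    (h₂ : i ≠ j - 1) : (α • wsMatrix a + β • (wsMatrix a)ᴴ + z • 1) i j = 0 := by
  have h₂' : j ≠ i + 1 := fun h' => h₂ (by rw [h', add_sub_cancel_right])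
  simp [wsMatrix_apply, one_apply, h, h₁, h₂']

variable (hn : 3 ≤ n)
include hn

theorem smul_wsMatrix_add_apply_add_one (i : Fin n) :
    (α • wsMatrix a + β • (wsMatrix a)ᴴ + z • 1) i (i + 1) = α * a i := by
  simp [wsMatrix_apply, one_apply, (add_one_add_one_ne_self hn i).symm,
    (add_one_ne_self hn i).symm]

theorem smul_wsMatrix_add_apply_add_one_left (i : Fin n) :
    (α • wsMatrix a + β • (wsMatrix a)ᴴ + z • 1) (i + 1) i = β * starRingEnd ℂ (a i) := by
  simp [wsMatrix_apply, one_apply, (add_one_add_one_ne_self hn i).symm, add_one_ne_self hn i]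

theorem smul_wsMatrix_add_apply_self (i : Fin n) :
    (α • wsMatrix a + β • (wsMatrix a)ᴴ + z • 1) i i = z := by
  simp [wsMatrix_apply, one_apply, (add_one_ne_self hn i).symm]

theorem det_smul_wsMatrix_add :
    (α • wsMatrix a + β • (wsMatrix a)ᴴ + z • 1).det =
      (-1) ^ (n + 1) * (α ^ n * ∏ i, a i + β ^ n * ∏ i, starRingEnd ℂ (a i)) +
        ∑ s with AdjFree s,
          ((-(α * β)) ^ #s * z ^ (n - 2 * #s)) * ∏ i ∈ s, ((‖a i‖ : ℝ) : ℂ) ^ 2 := by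
  rw [det_eq_of_cyclicTridiagonal hn _ fun i j hij => by
    by_contra! h
    exact hij (smul_wsMatrix_add_apply_eq_zero a α β z h.1 h.2.1 h.2.2)]
  simp only [smul_wsMatrix_add_apply_add_one a α β z hn,
    smul_wsMatrix_add_apply_add_one_left a α β z hn, smul_wsMatrix_add_apply_self a α β z hn,
    prod_mul_distrib, prod_const, card_univ, Fintype.card_fin]
  congr 1
  refine sum_congr rfl fun s hs => ?_
  rw [card_compl, (mem_filter.mp hs).2.card_union_image_add_one, Fintype.card_fin]
  have hnorm : ∀ i, ((‖a i‖ : ℝ) : ℂ) ^ 2 = a i * starRingEnd ℂ (a i) := fun i =>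
    (Complex.mul_conj' (a i)).symm
  simp only [hnorm, prod_mul_distrib]
  ring

end WeightedShift

theorem stmt17 (n : ℕ) (hn : 3 ≤ n) (a : Fin n → ℂ) (x y z : ℂ) :
    (x • ((1 / 2 : ℂ) • (wsMatrix a + (wsMatrix a)ᴴ)) +
        y • ((1 / (2 * Complex.I) : ℂ) • (wsMatrix a - (wsMatrix a)ᴴ)) +
        z • (1 : Matrix (Fin n) (Fin n) ℂ)).det =
      z ^ n +
        (∑ r ∈ Finset.Icc 1 (n / 2),
          Scirc r (fun i : Fin n => (((‖a i‖ : ℝ) : ℂ)) ^ 2) *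
            (x ^ 2 + y ^ 2) ^ r * (-(1 / 4) : ℂ) ^ r * z ^ (n - 2 * r)) +
        ((-1 : ℂ) ^ (n + 1) / 2 ^ n) *
          ((x - Complex.I * y) ^ n * (∏ j, a j) +
            (x + Complex.I * y) ^ n * (∏ j, (starRingEnd ℂ) (a j))) := by
  have : NeZero n := ⟨by omega⟩
  have hαβ : -((x - Complex.I * y) / 2 * ((x + Complex.I * y) / 2)) =
      (x ^ 2 + y ^ 2) * (-(1 / 4)) := by
    linear_combination (y ^ 2 / 4) * Complex.I_sq
  rw [smul_re_add_smul_im_add_smul_one, det_smul_wsMatrix_add a _ _ z hn, hαβ,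
    ← sum_Icc_Scirc_mul _ fun r => ((x ^ 2 + y ^ 2) * (-(1 / 4))) ^ r * z ^ (n - 2 * r),
    ← insert_Icc_add_one_left_eq_Icc (Nat.zero_le _), sum_insert (by simp), Scirc_zero]
  simp only [mul_pow, ← mul_assoc, div_pow, mul_zero, Nat.sub_zero, zero_add]
  ring
end
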